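/- Orthogonality-annihilation identity for q-Hermite and q^{-1}-Hermite polynomials: for all n > m ≥ 0, ∑_{k=0}^{n} [n choose k]_q b_{n-k}(x|q) h_{k+m}(x|q) = 0; and for all m ≥ n ≥ 0, this sum equals (-1)^n q^{n(n-1)/2} ((q;q)_m/(q;q)_{m-n}) h_{m-n}(x|q). -/
import Mathlib

/-- The Gaussian (q-)binomial coefficient, defined via the q-Pascal rule. -/
def gaussBinom (q : ℂ) : ℕ → ℕ → ℂ
  | _, 0 => 1
  | 0, _ + 1 => 0
  | n + 1, k + 1 => gaussBinom q n k + q ^ (k + 1) * gaussBinom q n (k + 1)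

/-- The continuous q-Hermite polynomials. -/
def qHermite (q x : ℂ) : ℕ → ℂ
  | 0 => 1
  | 1 => 2 * x
  | n + 2 => 2 * x * qHermite q x (n + 1) - (1 - q ^ (n + 1)) * qHermite q x n

/-- The `q⁻¹`-Hermite polynomials:
`b_{n+1} = -2 q^n x b_n + q^{n-1}(1-q^n) b_{n-1}`, `b_{-1}=0`, `b_0=1`. -/
def qInvHermite (q x : ℂ) : ℕ → ℂ
  | 0 => 1
  | 1 => -2 * x
  | n + 2 => -2 * q ^ (n + 1) * x * qInvHermite q x (n + 1)
      + q ^ n * (1 - q ^ (n + 1)) * qInvHermite q x n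

lemma gb_zero (q : ℂ) (n : ℕ) : gaussBinom q n 0 = 1 := by cases n <;> rfl

lemma gb_succ (q : ℂ) (n k : ℕ) :
    gaussBinom q (n+1) (k+1) = gaussBinom q n k + q ^ (k+1) * gaussBinom q n (k+1) := rfl

lemma gb_of_lt (q : ℂ) : ∀ n k, n < k → gaussBinom q n k = 0
  | 0, _+1, _ => rfl
  | n+1, k+1, h => by
      rw [gb_succ, gb_of_lt q n k (by omega), gb_of_lt q n (k+1) (by omega)]
      ring

lemma gbE (q : ℂ) : ∀ n k, (1 - q ^ (n + 1 - k)) * gaussBinom q (n+1) k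
    = (1 - q ^ (n+1)) * gaussBinom q n k := by
  intro n
  induction n with
  | zero =>
    intro k
    rcases k with _ | j
    · simp [gb_zero]
    · rcases Nat.lt_or_ge j 1 with hj | hj
      · interval_cases j
        · show (1 - q ^ 0) * _ = _ * gaussBinom q 0 1
          rw [gb_of_lt q 0 1 (by omega)]
          ring
      · rw [gb_of_lt q 0 (j+1) (by omega), gb_of_lt q 1 (j+1) (by omega)]
        ring
  | succ n IH =>
    intro k
    rcases k with _ | j
    · simp [gb_zero]
    · rcases Nat.lt_or_ge n j with hj | hj
      · have e : n + 1 + 1 - (j + 1) = 0 := by omega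
        rw [e, gb_of_lt q (n+1) (j+1) (by omega)]
        ring
      · obtain ⟨i, rfl⟩ := Nat.exists_eq_add_of_le hj
        have e1 : j + i + 1 + 1 - (j + 1) = i + 1 := by omega
        have h1 := IH j
        have h2 := IH (j+1)
        have e2 : j + i + 1 - j = i + 1 := by omega
        have e3 : j + i + 1 - (j + 1) = i := by omega
        rw [e2] at h1
        rw [e3] at h2
        have hB := gb_succ q (j+i) j
        rw [e1, gb_succ]
        linear_combination h1 + q^(j+1) * h2 - (1 - q^(j+i+1)) * hB

noncomputable def S (q x : ℂ) (n m : ℕ) : ℂ :=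
  ∑ k ∈ Finset.range (n + 1),
    gaussBinom q n k * qInvHermite q x (n - k) * qHermite q x (k + m)

lemma star (q x : ℂ) (n m : ℕ) :
    S q x (n+1) m = S q x n (m+1)
      + ∑ k ∈ Finset.range (n+1),
          q^k * gaussBinom q n k * qInvHermite q x (n+1-k) * qHermite q x (k+m) := by
  have key : ∑ k ∈ Finset.range (n+2),
        q^k * gaussBinom q n k * qInvHermite q x (n+1-k) * qHermite q x (k+m)
      = ∑ j ∈ Finset.range (n+1),
          q^(j+1) * gaussBinom q n (j+1) * qInvHermite q x (n-j) * qHermite q x (j+1+m)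
        + qInvHermite q x (n+1) * qHermite q x m := by
    rw [Finset.sum_range_succ']
    simp [gb_zero, Nat.succ_sub_succ]
  have key2 : ∑ k ∈ Finset.range (n+2),
        q^k * gaussBinom q n k * qInvHermite q x (n+1-k) * qHermite q x (k+m)
      = ∑ k ∈ Finset.range (n+1),
        q^k * gaussBinom q n k * qInvHermite q x (n+1-k) * qHermite q x (k+m) := by
    rw [Finset.sum_range_succ, gb_of_lt q n (n+1) (by omega)]
    ring
  have h1 : S q x (n+1) m
      = ∑ j ∈ Finset.range (n+1),
          gaussBinom q (n+1) (j+1) * qInvHermite q x (n-j) * qHermite q x (j+1+m)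
        + qInvHermite q x (n+1) * qHermite q x m := by
    rw [show S q x (n+1) m = ∑ k ∈ Finset.range (n+1+1),
          gaussBinom q (n+1) k * qInvHermite q x (n+1-k) * qHermite q x (k+m) from rfl,
        Finset.sum_range_succ']
    simp [gb_zero, Nat.succ_sub_succ]
  rw [h1, ← key2, key]
  have h2 : ∀ j ∈ Finset.range (n+1),
      gaussBinom q (n+1) (j+1) * qInvHermite q x (n-j) * qHermite q x (j+1+m)
      = gaussBinom q n j * qInvHermite q x (n-j) * qHermite q x (j+(m+1))
        + q^(j+1) * gaussBinom q n (j+1) * qInvHermite q x (n-j) * qHermite q x (j+1+m) := by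
    intro j _
    rw [gb_succ]
    have e : j + 1 + m = j + (m+1) := by omega
    rw [e]
    ring
  rw [Finset.sum_congr rfl h2, Finset.sum_add_distrib]
  have hs : S q x n (m+1) = ∑ j ∈ Finset.range (n+1),
      gaussBinom q n j * qInvHermite q x (n-j) * qHermite q x (j+(m+1)) := rfl
  rw [hs]
  ring

lemma recS (q x : ℂ) (n m : ℕ) :
    S q x (n+2) m = S q x (n+1) (m+1) - 2*q^(n+1)*x * S q x (n+1) m
      + q^n * (1 - q^(n+1)) * S q x n m := by
  rw [star q x (n+1) m]
  have hB : ∑ k ∈ Finset.range (n+2),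
      q^k * gaussBinom q (n+1) k * qInvHermite q x (n+1+1-k) * qHermite q x (k+m)
    = ∑ k ∈ Finset.range (n+2),
      (-(2*q^(n+1)*x) * (gaussBinom q (n+1) k * qInvHermite q x (n+1-k) * qHermite q x (k+m))
       + q^n*(1-q^(n+1)) * (gaussBinom q n k * qInvHermite q x (n-k) * qHermite q x (k+m))) := by
    apply Finset.sum_congr rfl
    intro k hk
    simp only [Finset.mem_range] at hk
    rcases Nat.lt_succ_iff_lt_or_eq.mp hk with hk' | rfl
    · have hkn : k ≤ n := by omega
      obtain ⟨i, rfl⟩ := Nat.exists_eq_add_of_le hkn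
      have e1 : k + i + 1 + 1 - k = i + 2 := by omega
      have e2 : k + i + 1 - k = i + 1 := by omega
      have e3 : k + i - k = i := by omega
      rw [e1, e2, e3]
      have hb : qInvHermite q x (i+2)
          = -2*q^(i+1)*x*qInvHermite q x (i+1) + q^i*(1-q^(i+1))*qInvHermite q x i := rfl
      have hE := gbE q (k+i) k
      rw [e2] at hE
      rw [hb]
      linear_combination (q^(k+i) * qInvHermite q x i * qHermite q x (k+m)) * hE
    · have e1 : n + 1 + 1 - (n + 1) = 1 := by omega
      have e2 : n + 1 - (n + 1) = 0 := by omega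
      have e3 : n - (n + 1) = 0 := by omega
      rw [e1, e2, e3, gb_of_lt q n (n+1) (by omega)]
      simp only [qInvHermite]
      ring
  rw [hB, Finset.sum_add_distrib, ← Finset.mul_sum, ← Finset.mul_sum]
  have hS : ∑ k ∈ Finset.range (n+2),
      gaussBinom q n k * qInvHermite q x (n-k) * qHermite q x (k+m) = S q x n m := by
    rw [Finset.sum_range_succ, gb_of_lt q n (n+1) (by omega)]
    have : S q x n m = ∑ k ∈ Finset.range (n+1),
        gaussBinom q n k * qInvHermite q x (n-k) * qHermite q x (k+m) := rfl
    rw [this]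
    ring
  rw [hS]
  have hS2 : ∑ k ∈ Finset.range (n+2),
      gaussBinom q (n+1) k * qInvHermite q x (n+1-k) * qHermite q x (k+m)
      = S q x (n+1) m := by
    rw [show S q x (n+1) m = ∑ k ∈ Finset.range (n+1+1),
        gaussBinom q (n+1) k * qInvHermite q x (n+1-k) * qHermite q x (k+m) from rfl]
  rw [hS2]
  ring

lemma main (q x : ℂ) : ∀ n m : ℕ,
    (m < n → S q x n m = 0) ∧
    (n ≤ m → S q x n m = (-1)^n * q^(n*(n-1)/2) *
        (∏ j ∈ Finset.Ico (m-n) m, (1 - q^(j+1))) * qHermite q x (m-n)) := by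
  intro n
  induction n using Nat.twoStepInduction with
  | zero =>
    intro m
    refine ⟨by omega, fun _ => ?_⟩
    simp [S, gb_zero, qInvHermite, Finset.Ico_self]
  | one =>
    intro m
    have hS1 : S q x 1 m = -(2*x) * qHermite q x m + qHermite q x (m+1) := by
      rw [show S q x 1 m = ∑ k ∈ Finset.range (1+1),
          gaussBinom q 1 k * qInvHermite q x (1-k) * qHermite q x (k+m) from rfl,
        Finset.sum_range_succ, Finset.sum_range_succ, Finset.sum_range_zero]
      have e : 1 + m = m + 1 := by omega
      rw [e]
      simp only [gaussBinom, qInvHermite, Nat.sub_self, Nat.sub_zero, zero_add, pow_one]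
      ring
    constructor
    · intro hm
      interval_cases m
      rw [hS1]
      show -(2*x) * qHermite q x 0 + qHermite q x (0+1) = 0
      norm_num [qHermite]
    · intro hm
      obtain ⟨d, rfl⟩ := Nat.exists_eq_add_of_le hm
      have e1 : 1 + d - 1 = d := by omega
      have e2 : 1 + d = d + 1 := by omega
      rw [hS1, e1, e2,
        Finset.prod_eq_prod_Ico_succ_bot (show d < d + 1 by omega), Finset.Ico_self,
        Finset.prod_empty]
      have hh : qHermite q x (d+1+1)
          = 2*x*qHermite q x (d+1) - (1-q^(d+1)) * qHermite q x d := rfl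
      rw [hh, show 1 * (1-1) / 2 = 0 from rfl]
      ring
  | more n ih1 ih2 =>
    intro m
    have hrec := recS q x n m
    have hq1 : q^((n+1)*((n+1)-1)/2) = q^n * q^(n*(n-1)/2) := by
      rw [← pow_add, Nat.triangle_succ]
      congr 1
      omega
    have hq2 : q^((n+2)*((n+2)-1)/2) = q^(n+1) * q^((n+1)*((n+1)-1)/2) := by
      rw [← pow_add, Nat.triangle_succ (n+1)]
      congr 1
      omega
    by_cases h0 : m + 1 < n + 1
    · have z1 : S q x (n+1) (m+1) = 0 := (ih2 (m+1)).1 h0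
      have z2 : S q x (n+1) m = 0 := (ih2 m).1 (by omega)
      have z3 : S q x n m = 0 := (ih1 m).1 (by omega)
      refine ⟨fun _ => ?_, fun h => absurd h (by omega)⟩
      rw [hrec, z1, z2, z3]
      ring
    · by_cases h1 : n = m
      · subst h1
        refine ⟨fun _ => ?_, fun h => absurd h (by omega)⟩
        have v1 := (ih2 (n+1)).2 le_rfl
        rw [Nat.sub_self] at v1
        have z2 : S q x (n+1) n = 0 := (ih2 n).1 (by omega)
        have v3 := (ih1 n).2 le_rfl
        rw [Nat.sub_self] at v3
        rw [hrec, v1, z2, v3, Finset.prod_Ico_succ_top (Nat.zero_le n), hq1]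
        ring
      · by_cases h2 : m = n + 1
        · subst h2
          refine ⟨fun _ => ?_, fun h => absurd h (by omega)⟩
          have v1 := (ih2 (n+1+1)).2 (by omega)
          rw [show n + 1 + 1 - (n+1) = 1 from by omega] at v1
          have v2 := (ih2 (n+1)).2 le_rfl
          rw [Nat.sub_self] at v2
          have v3 := (ih1 (n+1)).2 (by omega)
          rw [show n + 1 - n = 1 from by omega] at v3
          rw [hrec, v1, v2, v3,
            Finset.prod_Ico_succ_top (show 1 ≤ n + 1 by omega),
            Finset.prod_eq_prod_Ico_succ_bot (show 0 < n + 1 by omega), hq1,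
            show qHermite q x 1 = 2*x from rfl, show qHermite q x 0 = 1 from rfl]
          ring
        · have hm : n + 2 ≤ m := by omega
          refine ⟨fun h => absurd h (by omega), fun _ => ?_⟩
          obtain ⟨d, rfl⟩ := Nat.exists_eq_add_of_le hm
          have v1 := (ih2 (n+2+d+1)).2 (by omega)
          rw [show n+2+d+1 - (n+1) = d+2 from by omega] at v1
          have v2 := (ih2 (n+2+d)).2 (by omega)
          rw [show n+2+d - (n+1) = d+1 from by omega] at v2
          have v3 := (ih1 (n+2+d)).2 (by omega)
          rw [show n+2+d - n = d+2 from by omega] at v3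
          rw [show n+2+d - (n+2) = d from by omega]
          have P1 : ∏ j ∈ Finset.Ico (d+2) (n+2+d+1), (1 - q^(j+1))
              = (∏ j ∈ Finset.Ico (d+2) (n+2+d), (1 - q^(j+1))) * (1 - q^(n+2+d+1)) := by
            rw [Finset.prod_Ico_succ_top (show d+2 ≤ n+2+d by omega)]
          have P2 : ∏ j ∈ Finset.Ico (d+1) (n+2+d), (1 - q^(j+1))
              = (1 - q^(d+2)) * ∏ j ∈ Finset.Ico (d+2) (n+2+d), (1 - q^(j+1)) := by
            rw [Finset.prod_eq_prod_Ico_succ_bot (show d+1 < n+2+d by omega)]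
          have P3 : ∏ j ∈ Finset.Ico d (n+2+d), (1 - q^(j+1))
              = (1 - q^(d+1)) * ((1 - q^(d+2)) *
                  ∏ j ∈ Finset.Ico (d+2) (n+2+d), (1 - q^(j+1))) := by
            rw [Finset.prod_eq_prod_Ico_succ_bot (show d < n+2+d by omega),
              Finset.prod_eq_prod_Ico_succ_bot (show d+1 < n+2+d by omega)]
          have hh : qHermite q x (d+2)
              = 2*x*qHermite q x (d+1) - (1-q^(d+1)) * qHermite q x d := rfl
          rw [hrec, v1, v2, v3, P1, P2, P3, hh, hq2, hq1]
          ring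

/-- `∑_{k=0}^n [n choose k]_q b_{n-k} h_{k+m}` is `0` for `n > m` and equals
`(-1)^n q^{n(n-1)/2} ((q;q)_m/(q;q)_{m-n}) h_{m-n}` for `m ≥ n`; the ratio
`(q;q)_m/(q;q)_{m-n}` is written as `∏_{j=m-n+1}^{m} (1-q^j)`. -/
theorem qInvHermite_qHermite_sum (q x : ℂ) (n m : ℕ) :
    (m < n →
      ∑ k ∈ Finset.range (n + 1),
        gaussBinom q n k * qInvHermite q x (n - k) * qHermite q x (k + m) = 0) ∧
    (n ≤ m →
      ∑ k ∈ Finset.range (n + 1),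
        gaussBinom q n k * qInvHermite q x (n - k) * qHermite q x (k + m) =
        (-1) ^ n * q ^ (n * (n - 1) / 2) *
          (∏ j ∈ Finset.Ico (m - n) m, (1 - q ^ (j + 1))) * qHermite q x (m - n)) := by
  exact main q x n m
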